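/- arXiv:1211.7161 — 6 statements merged into one kernel-verified Lean document; each statement's English description precedes it below -/
import Mathlib

section
/- A string w of length 2n is a square if and only if there exists a perfect matching M on the positions {1,…,2n} of w such that (1) every edge {j,k} of M with j < k joins two equal symbols w_j = w_k, and (2) M is non-nesting: there are no two edges {j,ℓ} and {p,q} of M with j < p < q < ℓ. -/
/-!
A shuffle of `u` with `v` is the same as a set `S` of positions of `w` such that `w` reads `u`
on `S` and `v` on `Sᶜ`. So `w` is a square iff it reads the same word on some `S` and on `Sᶜ`.
Pairing the `k`-th element of `S` with the `k`-th element of `Sᶜ` gives an involution that swaps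
`S` and `Sᶜ` and is increasing on `S`; such involutions are non-nesting, and conversely a
non-nesting matching is one of them for `S` the set of left endpoints of its edges. Along such a
pairing, `w` reads the same word on `S` and on `Sᶜ` iff every edge joins equal letters.
-/

/-- `Shuffle u v w` : `w` is an interleaving of `u` and `v`
preserving the internal order of each. -/
inductive Shuffle {α : Type*} : List α → List α → List α → Prop
  | nil : Shuffle [] [] []
  | left {u v w : List α} (a : α) : Shuffle u v w → Shuffle (a :: u) v (a :: w)
  | right {u v w : List α} (a : α) : Shuffle u v w → Shuffle u (a :: v) (a :: w)

namespace Shuffle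

variable {α β : Type*}

theorem map (g : α → β) {u v w : List α} (h : Shuffle u v w) :
    Shuffle (u.map g) (v.map g) (w.map g) := by
  induction h with
  | nil => exact nil
  | left a _ ih => exact left (g a) ih
  | right a _ ih => exact right (g a) ih

theorem filter (p : α → Bool) : ∀ l : List α, Shuffle (l.filter p) (l.filter (!p ·)) l
  | [] => nil
  | a :: l => by
    by_cases h : p a
    · simpa [List.filter_cons, h] using left a (filter p l)
    · simpa [List.filter_cons, h] using right a (filter p l)

theorem exists_filter_finRange {u v w : List α} (h : Shuffle u v w) :
    ∃ p : Fin w.length → Bool, ((List.finRange w.length).filter p).map w.get = u ∧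
      ((List.finRange w.length).filter (!p ·)).map w.get = v := by
  induction h with
  | nil => exact ⟨fun _ => true, rfl, rfl⟩
  | left a _ ih =>
    obtain ⟨p, hu, hv⟩ := ih
    refine ⟨Fin.cons true p, ?_, ?_⟩ <;>
      simpa [List.finRange_succ, List.filter_map, Function.comp_def]
  | right a _ ih =>
    obtain ⟨p, hu, hv⟩ := ih
    refine ⟨Fin.cons false p, ?_, ?_⟩ <;>
      simpa [List.finRange_succ, List.filter_map, Function.comp_def]

end Shuffle

theorem List.filter_finRange_eq_sort {n : ℕ} (S : Finset (Fin n)) :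
    (List.finRange n).filter (· ∈ S) = S.sort :=
  List.Pairwise.eq_of_mem_iff ((List.pairwise_lt_finRange n).filter _)
    (Finset.sortedLT_sort S).pairwise (by simp)

theorem shuffle_iff_exists_finset {α : Type*} {u v w : List α} :
    Shuffle u v w ↔
      ∃ S : Finset (Fin w.length), S.sort.map w.get = u ∧ Sᶜ.sort.map w.get = v := by
  simp only [← List.filter_finRange_eq_sort]
  constructor
  · intro h
    obtain ⟨p, rfl, rfl⟩ := h.exists_filter_finRange
    exact ⟨Finset.univ.filter (p ·), by simp, by simp⟩
  · rintro ⟨S, rfl, rfl⟩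
    simpa using (Shuffle.filter (· ∈ S) (List.finRange w.length)).map w.get

section Pairing

variable {ι : Type*} [LinearOrder ι]

structure IsMonotonePairing (S : Finset ι) (f : ι → ι) : Prop where
  involutive : Function.Involutive f
  apply_mem_iff : ∀ x, f x ∈ S ↔ x ∉ S
  strictMonoOn : StrictMonoOn f S

namespace IsMonotonePairing

variable {S : Finset ι} {f : ι → ι}

theorem apply_ne (hf : IsMonotonePairing S f) (x : ι) : f x ≠ x := by
  intro h
  have := hf.apply_mem_iff x
  rw [h] at this
  tauto

theorem lt_iff_lt (hf : IsMonotonePairing S f) {x y : ι} (hxy : x ∈ S ↔ y ∈ S) :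
    f x < f y ↔ x < y := by
  by_cases hx : x ∈ S
  · exact hf.strictMonoOn.lt_iff_lt hx (hxy.1 hx)
  · have hfx := (hf.apply_mem_iff x).2 hx
    have hfy := (hf.apply_mem_iff y).2 (hxy.not.1 hx)
    rw [← hf.strictMonoOn.lt_iff_lt hfx hfy, hf.involutive, hf.involutive]

theorem not_nested (hf : IsMonotonePairing S f) {j p : ι} (hjp : j < p) (hp : p < f p)
    (hpj : f p < f j) : False := by
  by_cases h : j ∈ S ↔ p ∈ S
  · exact lt_asymm hpj ((hf.lt_iff_lt h).2 hjp)
  · have h' : j ∈ S ↔ f p ∈ S := by rw [hf.apply_mem_iff]; tauto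
    have := (hf.lt_iff_lt h').2 (hjp.trans hp)
    rw [hf.involutive] at this
    exact lt_asymm this (hp.trans hpj)

theorem map_sort [Fintype ι] (hf : IsMonotonePairing S f) : S.sort.map f = Sᶜ.sort := by
  refine List.Pairwise.eq_of_mem_iff (r := (· < ·)) ?_ (Finset.sortedLT_sort _).pairwise
    fun x => ?_
  · exact List.pairwise_map.2 <| (Finset.sortedLT_sort S).pairwise.imp_of_mem fun ha hb hab =>
      hf.strictMonoOn (by simpa using ha) (by simpa using hb) hab
  · simp only [List.mem_map, Finset.mem_sort, Finset.mem_compl]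
    constructor
    · rintro ⟨y, hy, rfl⟩
      rwa [← hf.apply_mem_iff, hf.involutive]
    · exact fun hx => ⟨f x, (hf.apply_mem_iff x).2 hx, hf.involutive x⟩

theorem map_sort_eq_map_sort_compl_iff [Fintype ι] (hf : IsMonotonePairing S f) {β : Type*}
    (g : ι → β) :
    S.sort.map g = Sᶜ.sort.map g ↔ ∀ x, g (f x) = g x := by
  rw [← hf.map_sort, List.map_map, eq_comm, List.map_inj_left]
  simp only [Finset.mem_sort, Function.comp_apply]
  refine ⟨fun h x => ?_, fun h x _ => h x⟩
  by_cases hx : x ∈ S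
  · exact h x hx
  · have := h (f x) ((hf.apply_mem_iff x).2 hx)
    rwa [hf.involutive, eq_comm] at this

end IsMonotonePairing

theorem Finset.exists_isMonotonePairing [Fintype ι] {S : Finset ι} (h : S.card = Sᶜ.card) :
    ∃ f, IsMonotonePairing S f := by
  let e : S ≃o ↥Sᶜ := (S.orderIsoOfFin h).symm.trans (Sᶜ.orderIsoOfFin rfl)
  have he (x : S) : (e x : ι) ∉ S := Finset.mem_compl.1 (e x).2
  have he' (x : ↥Sᶜ) : (e.symm x : ι) ∈ S := (e.symm x).2
  refine ⟨fun x => if hx : x ∈ S then e ⟨x, hx⟩ else e.symm ⟨x, Finset.mem_compl.2 hx⟩,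
    fun x => ?_, fun x => ?_, ?_⟩
  · by_cases hx : x ∈ S <;> simp [hx, he, he']
  · by_cases hx : x ∈ S <;> simp [hx, he, he']
  · intro x hx y hy hxy
    simp only [Finset.mem_coe] at hx hy
    simpa [hx, hy] using e.strictMono (show (⟨x, hx⟩ : S) < ⟨y, hy⟩ from hxy)

theorem isMonotonePairing_filter_lt [Fintype ι] {f : ι → ι} (hinv : Function.Involutive f)
    (hne : ∀ i, f i ≠ i) (hnest : ∀ j p, j < p → p < f p → f p < f j → False) :
    IsMonotonePairing (Finset.univ.filter fun i => i < f i) f where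
  involutive := hinv
  apply_mem_iff x := by
    simp only [Finset.mem_filter, Finset.mem_univ, true_and, hinv x, not_lt]
    exact ⟨le_of_lt, fun h => lt_of_le_of_ne h (hne x)⟩
  strictMonoOn a ha b hb hab := by
    simp only [Finset.coe_filter, Finset.mem_univ, true_and, Set.mem_ofPred_eq] at ha hb
    rcases lt_trichotomy (f a) (f b) with h | h | h
    · exact h
    · exact absurd (hinv.injective h) hab.ne
    · exact (hnest a b hab hb h).elim

end Pairing

-- The matching is a fixed-point-free involution `f`; the edge through `i` is `{i, f i}`.
theorem square_iff_nonNesting_matching_general {α : Type*} (w : List α) :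
    (∃ u : List α, Shuffle u u w) ↔
      ∃ f : Fin w.length → Fin w.length,
        Function.Involutive f ∧
        (∀ i, f i ≠ i) ∧
        (∀ i, w.get i = w.get (f i)) ∧
        (∀ j p : Fin w.length, j < p → p < f p → f p < f j → False) := by
  constructor
  · rintro ⟨u, hu⟩
    obtain ⟨S, hSu, hSv⟩ := shuffle_iff_exists_finset.1 hu
    have hS : S.sort.map w.get = Sᶜ.sort.map w.get := hSu.trans hSv.symm
    have hcard : S.card = Sᶜ.card := by simpa using congrArg List.length hS
    obtain ⟨f, hf⟩ := S.exists_isMonotonePairing hcard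
    exact ⟨f, hf.involutive, hf.apply_ne,
      fun i => ((hf.map_sort_eq_map_sort_compl_iff w.get).1 hS i).symm,
      fun _ _ => hf.not_nested⟩
  · rintro ⟨f, hinv, hne, hget, hnest⟩
    have hf := isMonotonePairing_filter_lt hinv hne hnest
    refine ⟨_, shuffle_iff_exists_finset.2 ⟨Finset.univ.filter (fun i => i < f i), rfl, ?_⟩⟩
    exact ((hf.map_sort_eq_map_sort_compl_iff w.get).2 fun i => (hget i).symm).symm

/-- a string of length `2n` is a square iff there is a
non-nesting perfect matching of its positions joining equal symbols.
The matching is given as a fixed-point-free involution `f`; the edge through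
`i` is `{i, f i}`.  Non-nesting: there are no edges `{j, ℓ}`, `{p, q}` with
`j < p < q < ℓ`. -/
theorem square_iff_nonNesting_matching {α : Type*} {n : ℕ} (w : List α)
    (hw : w.length = 2 * n) :
    (∃ u : List α, Shuffle u u w) ↔
      ∃ f : Fin w.length → Fin w.length,
        Function.Involutive f ∧
        (∀ i, f i ≠ i) ∧
        (∀ i, w.get i = w.get (f i)) ∧
        (∀ j p : Fin w.length, j < p → p < f p → f p < f j → False) :=
  square_iff_nonNesting_matching_general w
end

section
/- A string w is a square if and only if the nondeterministic queue automaton accepts w, where the automaton starts with an empty queue, repeatedly either enqueues the next input symbol or dequeues the front queue symbol when it equals the next input symbol, and accepts when both input and queue are empty. -/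
/-- One step of the nondeterministic queue automaton.  A configuration is a
pair `(Q, x)` of queue contents and remaining input.  The automaton may
enqueue the next input symbol at the right end of the queue, or match the
next input symbol against the front of the queue and dequeue it. -/
inductive QStep {α : Type*} : List α × List α → List α × List α → Prop
  | enq (Q x : List α) (σ : α) : QStep (Q, σ :: x) (Q ++ [σ], x)
  | deq (Q x : List α) (σ : α) : QStep (σ :: Q, σ :: x) (Q, x)

theorem Shuffle.symm {α : Type*} {u v w : List α} (h : Shuffle u v w) : Shuffle v u w := by
  induction h with
  | nil => exact .nil
  | left a _ ih => exact .right a ih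
  | right a _ ih => exact .left a ih

theorem accept_of_shuffle {α : Type*} :
    ∀ w u v Q : List α, Shuffle u v w → v = Q ++ u →
      Relation.ReflTransGen QStep (Q, w) (([] : List α), ([] : List α)) := by
  intro w
  induction w with
  | nil =>
    intro u v Q h he
    cases h
    have : Q = [] := by simpa using he.symm
    subst this
    exact Relation.ReflTransGen.refl
  | cons a w ih =>
    intro u v Q h he
    cases h with
    | @left u' v w' _ h' =>
      refine Relation.ReflTransGen.head (QStep.enq Q w a) ?_
      exact ih u' v (Q ++ [a]) h' (by simpa using he)
    | @right u v' w' _ h' =>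
      match Q, he with
      | [], he =>
        have hu : u = a :: v' := by simpa using he.symm
        subst hu
        refine Relation.ReflTransGen.head (QStep.enq [] w a) ?_
        exact ih v' (a :: v') [a] h'.symm rfl
      | b :: Q', he =>
        have hb : a = b := by simpa using congrArg (·.head?) he
        subst hb
        have hv : v' = Q' ++ u := by simpa using he
        refine Relation.ReflTransGen.head (QStep.deq Q' w a) ?_
        exact ih u v' Q' h' hv

theorem shuffle_of_accept {α : Type*} (c : List α × List α)
    (h : Relation.ReflTransGen QStep c (([] : List α), ([] : List α))) :
    ∃ u v : List α, Shuffle u v c.2 ∧ v = c.1 ++ u := by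
  induction h using Relation.ReflTransGen.head_induction_on with
  | refl => exact ⟨[], [], .nil, rfl⟩
  | head hstep _ ih =>
    cases hstep with
    | enq Q x σ =>
      obtain ⟨u, v, hs, hv⟩ := ih
      exact ⟨σ :: u, v, .left σ hs, by simpa using hv⟩
    | deq Q x σ =>
      obtain ⟨u, v, hs, hv⟩ := ih
      exact ⟨u, σ :: v, .right σ hs, by simp [hv]⟩

/-- a string is a square iff the queue automaton accepts it,
i.e. iff `ε‖w ⊢* ε‖ε`. -/
theorem square_iff_queue_accepts {α : Type*} (w : List α) :
    (∃ u : List α, Shuffle u u w) ↔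
      Relation.ReflTransGen QStep (([] : List α), w) (([] : List α), []) := by
  constructor
  · rintro ⟨u, hu⟩
    exact accept_of_shuffle w u u [] hu rfl
  · intro h
    obtain ⟨u, v, hs, hv⟩ := shuffle_of_accept _ h
    simp only [List.nil_append] at hv
    exact ⟨u, hv ▸ hs⟩
end

section
/- If during a computation of the queue automaton a subword x₂ of the input is consumed by a subword u₂ of the queue with resultant z₂ (i.e., u₁u₂u₃‖x₁x₂x₃ ⊢* u₂u₃z₁‖x₂x₃ ⊢* u₃z₁z₂‖x₃), then u₂ and z₂ are subsequences of x₂, and moreover x₂ is a shuffle of u₂ and z₂. -/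
/-- `Consumes u x z` : the input word `x` is consumed by the queue word `u`
with resultant `z`.  Each symbol of `x` is, in order, either matched against
the current front symbol of the queue word `u` (case `mtch`) or enqueued,
becoming part of the resultant `z` (case `push`); at the end all of `u` has
been matched and dequeued.  This is exactly the paper's notion
`u₁u₂u₃‖x₁x₂x₃ ⊢* u₂u₃z₁‖x₂x₃ ⊢* u₃z₁z₂‖x₃` of `x₂` being consumed by `u₂`
with resultant `z₂`. -/
inductive Consumes {α : Type*} : List α → List α → List α → Prop
  | nil : Consumes [] [] []
  | mtch {u x z : List α} (a : α) : Consumes u x z → Consumes (a :: u) (a :: x) z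
  | push {u x z : List α} (a : α) : Consumes u x z → Consumes u (a :: x) (a :: z)

/-- if `x₂` is consumed by `u₂` with resultant `z₂`, then `u₂`
and `z₂` are subsequences of `x₂`, and `x₂` is a shuffle of `u₂` and `z₂`. -/
theorem consumes_sublist_shuffle {α : Type*} {u₂ x₂ z₂ : List α}
    (h : Consumes u₂ x₂ z₂) :
    u₂.Sublist x₂ ∧ z₂.Sublist x₂ ∧ Shuffle u₂ z₂ x₂ := by
  induction h with
  | nil => exact ⟨.slnil, .slnil, .nil⟩
  | mtch a _ ih => exact ⟨ih.1.cons₂ a, ih.2.1.cons a, .left a ih.2.2⟩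
  | push a _ ih => exact ⟨ih.1.cons a, ih.2.1.cons₂ a, .right a ih.2.2⟩
end

section
/- Let e₀ and e be symbols not occurring in any of the strings u₁,…,u_k, x₁,…,x_k, or v, and let w = e₀u₁e u₂e⋯u_k e e₀x₁e x₂e⋯x_k e v. Then any accepting computation of the queue automaton on w must first enqueue u₁e⋯u_k e (matching the two e₀'s), and then consume each x_i by the corresponding u_i, i.e., the computation passes through configurations u_i e⋯u_k e z₁⋯z_{i-1} ‖ x_i e⋯x_k e v for resultants z_i, ending with z₁⋯z_k ‖ v ⊢* ε‖ε. -/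
theorem List.count_flatten_map_append_singleton {α : Type*} [DecidableEq α] {e : α}
    {us : List (List α)} (h : ∀ u ∈ us, e ∉ u) :
    (us.map (· ++ [e])).flatten.count e = us.length := by
  induction us with
  | nil => rfl
  | cons u us ih =>
    simp only [List.forall_mem_cons] at h
    simp [List.count_eq_zero.mpr h.1, ih h.2]

theorem List.notMem_flatten_map_append_singleton {α : Type*} {a e : α} {us : List (List α)}
    (hne : a ≠ e) (h : ∀ u ∈ us, a ∉ u) : a ∉ (us.map (· ++ [e])).flatten := by
  simpa [hne] using h

def QAccepts {α : Type*} (Q x : List α) : Prop :=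
  Relation.ReflTransGen QStep (Q, x) ([], [])

namespace QAccepts

variable {α : Type*}

theorem queue_eq_nil {Q : List α} (h : QAccepts Q []) : Q = [] := by
  rcases h.cases_head with heq | ⟨_, hstep, _⟩
  · exact (Prod.mk.inj heq).1
  · cases hstep

theorem enqueue_or_dequeue {Q t : List α} {a : α} (h : QAccepts Q (a :: t)) :
    QAccepts (Q ++ [a]) t ∨ ∃ Q', Q = a :: Q' ∧ QAccepts Q' t := by
  rcases h.cases_head with heq | ⟨_, hstep, hrest⟩
  · simp at heq
  · cases hstep with
    | enq => exact .inl hrest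
    | deq Q' => exact .inr ⟨Q', rfl, hrest⟩

theorem count_le [DecidableEq α] {Q x : List α} (h : QAccepts Q x) (a : α) :
    Q.count a ≤ x.count a := by
  induction x generalizing Q with
  | nil => simp [h.queue_eq_nil]
  | cons b x ih =>
    rcases h.enqueue_or_dequeue with h' | ⟨Q', rfl, h'⟩
    · have := ih h'
      simp only [List.count_append, List.count_cons, List.count_nil] at this ⊢
      omega
    · simp only [List.count_cons]
      have := ih h'
      omega

/-- Enqueuing `a` would leave more copies of `a` in the queue than in the input. -/
theorem dequeue_of_count_le [DecidableEq α] {Q t : List α} {a : α}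
    (hcount : t.count a ≤ Q.count a) (h : QAccepts Q (a :: t)) :
    ∃ Q', Q = a :: Q' ∧ QAccepts Q' t := by
  refine h.enqueue_or_dequeue.resolve_left fun h' => ?_
  have := h'.count_le a
  simp only [List.count_append, List.count_singleton_self] at this
  omega

theorem enqueue_of_notMem_head {b : α} {Q y t : List α} (hb : b ∉ y)
    (h : QAccepts (b :: Q) (y ++ t)) : QAccepts (b :: (Q ++ y)) t := by
  induction y generalizing Q with
  | nil => simpa using h
  | cons a y ih =>
    rcases h.enqueue_or_dequeue with h' | ⟨_, hba, _⟩
    · simpa using ih (List.not_mem_of_not_mem_cons hb) h'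
    · exact absurd (List.mem_cons.mpr (.inl (List.cons.inj hba).1)) hb

/-- The `e` closing `x` cannot be enqueued, so it is matched against the `e` closing `u`. -/
theorem consumes_of_append_cons [DecidableEq α] {e : α} {u x R S : List α} (hu : e ∉ u)
    (hx : e ∉ x) (hcount : S.count e ≤ R.count e) (h : QAccepts (u ++ e :: R) (x ++ e :: S)) :
    ∃ z, Consumes u x z ∧ QAccepts (R ++ z) S := by
  induction x generalizing u R with
  | nil =>
    have hcount' : S.count e ≤ (u ++ e :: R).count e := by
      simp only [List.count_append, List.count_cons_self]
      omega
    obtain ⟨Q', hQ, h'⟩ := dequeue_of_count_le hcount' h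
    cases u with
    | nil => exact ⟨[], .nil, by simpa [(List.cons.inj hQ).2] using h'⟩
    | cons b u => exact absurd (List.mem_cons.mpr (.inl (List.cons.inj hQ).1.symm)) hu
  | cons a x ih =>
    have hx' : e ∉ x := List.not_mem_of_not_mem_cons hx
    rcases h.enqueue_or_dequeue with h' | ⟨Q', hQ, h'⟩
    · have hcount' : S.count e ≤ (R ++ [a]).count e := by
        rw [List.count_append]
        omega
      obtain ⟨z, hz, hrest⟩ := ih hu hx' hcount' (by simpa using h')
      exact ⟨a :: z, .push a hz, by simpa using hrest⟩
    · cases u with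
      | nil => exact absurd (List.mem_cons.mpr (.inl (List.cons.inj hQ).1)) hx
      | cons b u =>
        obtain ⟨rfl, rfl⟩ := List.cons.inj hQ
        obtain ⟨z, hz, hrest⟩ := ih (List.not_mem_of_not_mem_cons hu) hx' hcount h'
        exact ⟨z, .mtch b hz, hrest⟩

theorem consumes_blocks [DecidableEq α] {e : α} {us xs : List (List α)} {Z v : List α}
    (hlen : us.length = xs.length) (hus : ∀ u ∈ us, e ∉ u) (hxs : ∀ x ∈ xs, e ∉ x)
    (hcount : v.count e ≤ Z.count e)
    (h : QAccepts ((us.map (· ++ [e])).flatten ++ Z) ((xs.map (· ++ [e])).flatten ++ v)) :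
    ∃ zs : List (List α), zs.length = us.length ∧
      (∀ i (h₁ : i < us.length) (h₂ : i < xs.length) (h₃ : i < zs.length),
        Consumes us[i] xs[i] zs[i]) ∧
      QAccepts (Z ++ zs.flatten) v := by
  induction us generalizing xs Z with
  | nil =>
    obtain rfl := List.eq_nil_of_length_eq_zero hlen.symm
    exact ⟨[], rfl, fun _ h₁ => absurd h₁ (Nat.not_lt_zero _), by simpa using h⟩
  | cons u us ih =>
    obtain _ | ⟨x, xs⟩ := xs
    · simp at hlen
    simp only [List.length_cons, Nat.add_right_cancel_iff] at hlen
    simp only [List.forall_mem_cons] at hus hxs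
    have hcount' : ((xs.map (· ++ [e])).flatten ++ v).count e ≤
        ((us.map (· ++ [e])).flatten ++ Z).count e := by
      simp only [List.count_append, List.count_flatten_map_append_singleton hus.2,
        List.count_flatten_map_append_singleton hxs.2, hlen]
      omega
    obtain ⟨z, hz, hrest⟩ := consumes_of_append_cons hus.1 hxs.1 hcount' (by simpa using h)
    have hcountZ : v.count e ≤ (Z ++ z).count e := by
      rw [List.count_append]
      omega
    obtain ⟨zs, hlen', hzs, hacc⟩ := ih hlen hus.2 hxs.2 hcountZ (by simpa using hrest)
    refine ⟨z :: zs, by simp [hlen'], fun i h₁ h₂ h₃ => ?_, by simpa using hacc⟩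
    cases i with
    | zero => exact hz
    | succ i => exact hzs i (by simpa using h₁) (by simpa using h₂) (by simpa using h₃)

end QAccepts

/-- for `w = e₀u₁e⋯u_k e e₀ x₁e⋯x_k e v` with `e₀, e` fresh,
any accepting computation consumes each `x_i` by the corresponding `u_i`,
with some resultant `z_i`, and then accepts from configuration
`z₁⋯z_k ‖ v`. -/
theorem accepting_forces_blockwise_consumption {α : Type*}
    (e₀ e : α) (us xs : List (List α)) (v : List α)
    (hlen : us.length = xs.length)
    (hne : e₀ ≠ e)
    (hus : ∀ u ∈ us, e₀ ∉ u ∧ e ∉ u)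
    (hxs : ∀ x ∈ xs, e₀ ∉ x ∧ e ∉ x)
    (hv : e₀ ∉ v ∧ e ∉ v)
    (hacc : Relation.ReflTransGen QStep
      (([] : List α),
        e₀ :: ((us.map (fun u => u ++ [e])).flatten) ++
        e₀ :: ((xs.map (fun x => x ++ [e])).flatten) ++ v)
      (([] : List α), [])) :
    ∃ zs : List (List α), zs.length = us.length ∧
      (∀ i (h₁ : i < us.length) (h₂ : i < xs.length) (h₃ : i < zs.length),
        Consumes (us[i]'h₁) (xs[i]'h₂) (zs[i]'h₃)) ∧
      Relation.ReflTransGen QStep (zs.flatten, v) (([] : List α), []) := by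
  classical
  set U := (us.map (· ++ [e])).flatten
  set X := (xs.map (· ++ [e])).flatten
  have he₀U : e₀ ∉ U := List.notMem_flatten_map_append_singleton hne fun u hu => (hus u hu).1
  have he₀X : e₀ ∉ X := List.notMem_flatten_map_append_singleton hne fun x hx => (hxs x hx).1
  have hstart : QAccepts [] (e₀ :: (U ++ e₀ :: (X ++ v))) := by simpa [QAccepts] using hacc
  have hfirst : QAccepts [e₀] (U ++ e₀ :: (X ++ v)) := by
    rcases hstart.enqueue_or_dequeue with h | ⟨_, hQ, _⟩
    exacts [h, nomatch hQ]
  have hsecond : QAccepts (e₀ :: U) (e₀ :: (X ++ v)) :=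
    QAccepts.enqueue_of_notMem_head (Q := []) he₀U hfirst
  obtain ⟨_, hQ, hblocks⟩ := QAccepts.dequeue_of_count_le
    (by simp [List.count_eq_zero.mpr he₀X, List.count_eq_zero.mpr hv.1]) hsecond
  obtain rfl := (List.cons.inj hQ).2
  obtain ⟨zs, hlen', hzs, hrest⟩ := QAccepts.consumes_blocks (Z := []) (v := v) hlen
    (fun u hu => (hus u hu).2) (fun x hx => (hxs x hx).2)
    (by simp [List.count_eq_zero.mpr hv.2]) (by simpa using hblocks)
  exact ⟨zs, hlen', hzs, by simpa [QAccepts] using hrest⟩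
end

section
/- In any accepting computation of the queue automaton, the induced matching between positions of the input (pairing each enqueued symbol with the input symbol that later matches it) is non-nesting: it never happens that one matched pair (j,ℓ) strictly contains another matched pair (p,q), i.e., j < p < q < ℓ is impossible. -/
/-!
Along a run the matched pairs are produced in strictly increasing order of both coordinates.
For match positions this holds because each match consumes the current input symbol. For enqueue
positions it is the FIFO discipline: while the queue's positions increase and lie before the input
head, a match pairs the front of the queue, and every later pair starts further back in the queue
or at a later input position. Two pairs increasing in both coordinates cannot nest.
-/

/-- `Run Q i x P` : starting with queue `Q` (a list of pairs of an input
position and the symbol enqueued from it), with the next input symbol at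
position `i` and remaining input `x`, the queue automaton can reach the
accepting configuration (empty queue, empty input), producing the list `P`
of matched pairs `(enqueue position, match position)` along the way.
At each step the automaton either enqueues the next input symbol (recording
its position) or matches it with the front of the queue, pairing the front
symbol's original position with the current position. -/
inductive Run {α : Type*} : List (ℕ × α) → ℕ → List α → List (ℕ × ℕ) → Prop
  | done (i : ℕ) : Run [] i [] []
  | enq {Q : List (ℕ × α)} {i : ℕ} {a : α} {x : List α} {P : List (ℕ × ℕ)} :
      Run (Q ++ [(i, a)]) (i + 1) x P → Run Q i (a :: x) P
  | deq {Q : List (ℕ × α)} {i j : ℕ} {a : α} {x : List α} {P : List (ℕ × ℕ)} :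
      Run Q (i + 1) x P → Run ((j, a) :: Q) i (a :: x) ((j, i) :: P)

theorem List.Pairwise.snd_lt_of_fst_lt {β γ : Type*} [Preorder β] [Preorder γ] {L : List (β × γ)}
    (hfst : L.Pairwise fun a b => a.1 < b.1) (hsnd : L.Pairwise fun a b => a.2 < b.2)
    {a b : β × γ} (ha : a ∈ L) (hb : b ∈ L) (hab : a.1 < b.1) : a.2 < b.2 := by
  induction L with
  | nil => simp at ha
  | cons c L ih =>
    rw [List.pairwise_cons] at hfst hsnd
    rcases List.mem_cons.1 ha with rfl | haL
    · rcases List.mem_cons.1 hb with rfl | hbL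
      · exact absurd hab (lt_irrefl _)
      · exact hsnd.1 b hbL
    · rcases List.mem_cons.1 hb with rfl | hbL
      · exact absurd hab (hfst.1 a haL).asymm
      · exact ih hfst.2 hsnd.2 haL hbL

namespace Run

variable {α : Type*} {Q : List (ℕ × α)} {i : ℕ} {x : List α} {P : List (ℕ × ℕ)}

theorem le_snd_of_mem (hrun : Run Q i x P) : ∀ e ∈ P, i ≤ e.2 := by
  induction hrun with
  | done => simp
  | enq _ ih => exact fun e he => Nat.le_of_succ_le (ih e he)
  | deq _ ih =>
    intro e he
    rcases List.mem_cons.1 he with rfl | he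
    · exact le_rfl
    · exact Nat.le_of_succ_le (ih e he)

theorem pairwise_snd_lt (hrun : Run Q i x P) : P.Pairwise fun a b => a.2 < b.2 := by
  induction hrun with
  | done => exact List.Pairwise.nil
  | enq _ ih => exact ih
  | deq hrun ih => exact List.pairwise_cons.2 ⟨fun e he => hrun.le_snd_of_mem e he, ih⟩

theorem fst_mem_or_le (hrun : Run Q i x P) : ∀ e ∈ P, (∃ a, (e.1, a) ∈ Q) ∨ i ≤ e.1 := by
  induction hrun with
  | done => simp
  | enq _ ih =>
    intro e he
    rcases ih e he with ⟨b, hb⟩ | hle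
    · rcases List.mem_append.1 hb with hb | hb
      · exact Or.inl ⟨b, hb⟩
      · exact Or.inr (congrArg Prod.fst (List.mem_singleton.1 hb)).ge
    · exact Or.inr (Nat.le_of_succ_le hle)
  | deq _ ih =>
    intro e he
    rcases List.mem_cons.1 he with rfl | he
    · exact Or.inl ⟨_, List.mem_cons_self⟩
    · rcases ih e he with ⟨b, hb⟩ | hle
      · exact Or.inl ⟨b, List.mem_cons_of_mem _ hb⟩
      · exact Or.inr (Nat.le_of_succ_le hle)

theorem pairwise_fst_lt (hrun : Run Q i x P) (hQ : ∀ e ∈ Q, e.1 < i)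
    (hQsorted : Q.Pairwise fun a b => a.1 < b.1) : P.Pairwise fun a b => a.1 < b.1 := by
  induction hrun with
  | done => exact List.Pairwise.nil
  | enq _ ih =>
    refine ih (fun e he => ?_) ?_
    · rcases List.mem_append.1 he with he | he
      · exact Nat.lt_succ_of_lt (hQ e he)
      · simp [List.mem_singleton.1 he]
    · exact List.pairwise_append.2
        ⟨hQsorted, List.pairwise_singleton _ _, fun e he _ h => List.mem_singleton.1 h ▸ hQ e he⟩
  | @deq Q i j a x P hrun ih =>
    obtain ⟨hfront, hQsorted⟩ := List.pairwise_cons.1 hQsorted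
    have hj : j < i := hQ _ List.mem_cons_self
    refine List.pairwise_cons.2 ⟨fun e he => ?_, ih (fun e he => ?_) hQsorted⟩
    · rcases hrun.fst_mem_or_le e he with ⟨b, hb⟩ | hle
      · exact hfront _ hb
      · exact hj.trans_le (Nat.le_of_succ_le hle)
    · exact Nat.lt_succ_of_lt (hQ e (List.mem_cons_of_mem _ he))

end Run

theorem run_matching_nonNesting_general {α : Type*} {w : List α} {P : List (ℕ × ℕ)}
    (hrun : Run ([] : List (ℕ × α)) 0 w P)
    {j ℓ p q : ℕ} (h₁ : (j, ℓ) ∈ P) (h₂ : (p, q) ∈ P)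
    (hjp : j < p) (hqℓ : q < ℓ) : False :=
  (hrun.pairwise_fst_lt (by simp) List.Pairwise.nil).snd_lt_of_fst_lt hrun.pairwise_snd_lt
    h₁ h₂ hjp |>.asymm hqℓ

/-- in any accepting computation of the queue automaton, the
induced matching on input positions is non-nesting: no matched pair
`(j, ℓ)` strictly contains another matched pair `(p, q)`. -/
theorem run_matching_nonNesting {α : Type*} {w : List α} {P : List (ℕ × ℕ)}
    (hrun : Run ([] : List (ℕ × α)) 0 w P)
    {j ℓ p q : ℕ} (h₁ : (j, ℓ) ∈ P) (h₂ : (p, q) ∈ P)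
    (hjp : j < p) (hpq : p < q) (hqℓ : q < ℓ) : False :=
  run_matching_nonNesting_general hrun h₁ h₂ hjp hqℓ
end

section
/- In any accepting computation of the queue automaton on V = ∏_{j=ℓ,…,1} (c₁ x^j y^j c₂)², no x is matched with another x from the same maximal block x^j, and no y is matched with another y from the same maximal block y^j. -/
/-- The word `v_j = c₁ x^j y^j c₂`. -/
def vblk {α : Type*} (c₁ c₂ x y : α) (j : ℕ) : List α :=
  c₁ :: (List.replicate j x ++ List.replicate j y ++ [c₂])

/-- The word `V = v_ℓ v_ℓ ⋯ v₂ v₂ v₁ v₁`. -/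
def Vword {α : Type*} (c₁ c₂ x y : α) : ℕ → List α
  | 0 => []
  | (j + 1) =>
      vblk c₁ c₂ x y (j + 1) ++ vblk c₁ c₂ x y (j + 1) ++ Vword c₁ c₂ x y j

theorem List.getElem?_eq_some_of_drop_eq_cons {α : Type*} {w x : List α} {a : α} {i : ℕ}
    (h : w.drop i = a :: x) : w[i]? = some a := by
  rw [← Nat.add_zero i, ← List.getElem?_drop, h, List.getElem?_cons_zero]

namespace Run

variable {α : Type*} {Q : List (ℕ × α)} {i : ℕ} {x : List α} {P : List (ℕ × ℕ)}

theorem map_fst_eq_append (h : Run Q i x P) :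
    ∃ L : List ℕ, P.map Prod.fst = Q.map Prod.fst ++ L ∧ L.Pairwise (· < ·) ∧ ∀ m ∈ L, i ≤ m := by
  induction h with
  | done => exact ⟨[], by simp⟩
  | @enq Q i a x P _ ih =>
    obtain ⟨L, hL, hsorted, hge⟩ := ih
    refine ⟨i :: L, by simpa using hL, List.pairwise_cons.2 ⟨fun m hm => hge m hm, hsorted⟩, ?_⟩
    simp only [List.mem_cons, forall_eq_or_imp, le_refl, true_and]
    exact fun m hm => Nat.le_of_succ_le (hge m hm)
  | deq _ ih =>
    obtain ⟨L, hL, hsorted, hge⟩ := ih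
    exact ⟨L, by simpa using hL, hsorted, fun m hm => Nat.le_of_succ_le (hge m hm)⟩

theorem map_snd_pairwise (h : Run Q i x P) :
    (P.map Prod.snd).Pairwise (· < ·) ∧ ∀ m ∈ P.map Prod.snd, i ≤ m := by
  induction h with
  | done => simp
  | enq _ ih => exact ⟨ih.1, fun m hm => Nat.le_of_succ_le (ih.2 m hm)⟩
  | deq _ ih =>
    simp only [List.map_cons, List.pairwise_cons, List.mem_cons, forall_eq_or_imp, le_refl,
      true_and]
    exact ⟨⟨fun m hm => ih.2 m hm, ih.1⟩, fun m hm => Nat.le_of_succ_le (ih.2 m hm)⟩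

theorem perm (h : Run Q i x P) :
    (P.map Prod.fst ++ P.map Prod.snd).Perm (Q.map Prod.fst ++ List.range' i x.length) := by
  induction h with
  | done => simp
  | enq _ ih =>
    rw [List.length_cons, List.range'_succ]
    exact ih.trans (List.Perm.of_eq (by simp))
  | @deq Q i j a x P _ ih =>
    simp only [List.map_cons, List.length_cons, List.range'_succ, List.cons_append]
    exact (List.perm_middle.trans ((ih.cons i).trans List.perm_middle.symm)).cons j

theorem fst_lt_snd_and_getElem?_eq {w : List α} (h : Run Q i x P) (hx : w.drop i = x)
    (hQ : ∀ e ∈ Q, e.1 < i ∧ w[e.1]? = some e.2) :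
    ∀ e ∈ P, e.1 < e.2 ∧ w[e.1]? = w[e.2]? := by
  induction h with
  | done => simp
  | @enq Q i a x P _ ih =>
    refine ih (by rw [← List.tail_drop, hx, List.tail_cons]) fun e he => ?_
    rcases List.mem_append.1 he with he | he
    · exact ⟨(hQ e he).1.trans (Nat.lt_succ_self i), (hQ e he).2⟩
    · obtain rfl := List.mem_singleton.1 he
      exact ⟨Nat.lt_succ_self i, List.getElem?_eq_some_of_drop_eq_cons hx⟩
  | @deq Q i j a x P _ ih =>
    have hx' : w.drop (i + 1) = x := by rw [← List.tail_drop, hx, List.tail_cons]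
    have hQ' : ∀ e ∈ Q, e.1 < i + 1 ∧ w[e.1]? = some e.2 := fun e he =>
      ⟨(hQ e (List.mem_cons_of_mem _ he)).1.trans (Nat.lt_succ_self i),
        (hQ e (List.mem_cons_of_mem _ he)).2⟩
    rintro e (_ | ⟨_, he⟩)
    · obtain ⟨hji, hj⟩ := hQ (j, a) List.mem_cons_self
      exact ⟨hji, hj.trans (List.getElem?_eq_some_of_drop_eq_cons hx).symm⟩
    · exact ih hx' hQ' e he

end Run

structure IsNonNestingMatching {α : Type*} (w : List α) (P : List (ℕ × ℕ)) : Prop where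
  perm : (P.map Prod.fst ++ P.map Prod.snd).Perm (List.range w.length)
  fst_lt_snd : ∀ e ∈ P, e.1 < e.2
  getElem?_fst_eq_snd : ∀ e ∈ P, w[e.1]? = w[e.2]?
  snd_lt_snd : ∀ e ∈ P, ∀ f ∈ P, e.1 < f.1 → e.2 < f.2

theorem List.snd_lt_snd_of_pairwise {P : List (ℕ × ℕ)}
    (h₁ : (P.map Prod.fst).Pairwise (· < ·)) (h₂ : (P.map Prod.snd).Pairwise (· < ·))
    {e f : ℕ × ℕ} (he : e ∈ P) (hf : f ∈ P) (hlt : e.1 < f.1) : e.2 < f.2 := by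
  have hboth : P.Pairwise fun e f => (e.1 < f.1 ∧ e.2 < f.2) ∨ (f.1 < e.1 ∧ f.2 < e.2) :=
    ((List.pairwise_map.1 h₁).and (List.pairwise_map.1 h₂)).imp Or.inl
  have hne : e ≠ f := by rintro rfl; exact lt_irrefl _ hlt
  have : Std.Symm fun e f : ℕ × ℕ => (e.1 < f.1 ∧ e.2 < f.2) ∨ (f.1 < e.1 ∧ f.2 < e.2) :=
    ⟨fun _ _ => Or.symm⟩
  rcases hboth.forall he hf hne with h | h <;> omega

theorem Run.isNonNestingMatching {α : Type*} {w : List α} {P : List (ℕ × ℕ)}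
    (h : Run [] 0 w P) : IsNonNestingMatching w P := by
  have hfst : (P.map Prod.fst).Pairwise (· < ·) := by
    obtain ⟨L, hL, hsorted, -⟩ := h.map_fst_eq_append
    simpa [hL] using hsorted
  have hpairs := h.fst_lt_snd_and_getElem?_eq (w := w) (List.drop_zero) (by simp)
  exact
    { perm := by simpa [List.range_eq_range'] using h.perm
      fst_lt_snd := fun e he => (hpairs e he).1
      getElem?_fst_eq_snd := fun e he => (hpairs e he).2
      snd_lt_snd := fun _ he _ hf => List.snd_lt_snd_of_pairwise hfst h.map_snd_pairwise.1 he hf }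

theorem List.countP_range_getElem? {α : Type*} (q : α → Bool) (l : List α) {n : ℕ}
    (hn : l.length ≤ n) : (List.range n).countP (fun r => l[r]?.any q) = l.countP q := by
  induction l generalizing n with
  | nil => simp
  | cons a l ih =>
    obtain ⟨n, rfl⟩ : ∃ m, n = m + 1 := ⟨n - 1, by simp at hn; omega⟩
    rw [List.range_succ_eq_map, List.countP_cons, List.countP_map, List.countP_cons,
      ← ih (Nat.le_of_succ_le_succ hn)]
    simp [Function.comp_def]

theorem List.exists_mem_ne_of_odd_countP {P : List (ℕ × ℕ)} {n : ℕ}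
    (hP : (P.map Prod.fst ++ P.map Prod.snd).Perm (List.range n)) {f : ℕ → Bool}
    (hodd : Odd ((List.range n).countP f)) : ∃ e ∈ P, f e.1 ≠ f e.2 := by
  by_contra! hsame
  have hsplit : (P.map Prod.fst).countP f = (P.map Prod.snd).countP f := by
    simp only [List.countP_map]
    exact List.countP_congr fun e he => by simp [hsame e he]
  rw [← hP.countP_eq, List.countP_append, hsplit] at hodd
  exact Nat.not_even_iff_odd.2 hodd ⟨_, rfl⟩

theorem IsNonNestingMatching.exists_straddle_of_odd_countP_take {α : Type*} {w : List α}
    {P : List (ℕ × ℕ)} (hM : IsNonNestingMatching w P) {q : α → Bool} {p : ℕ}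
    (hodd : Odd ((w.take p).countP q)) :
    ∃ e ∈ P, e.1 < p ∧ p ≤ e.2 ∧ ∃ s, w[e.2]? = some s ∧ q s := by
  rw [← List.countP_range_getElem? q _ (n := w.length) (w.length_take_le' p)] at hodd
  obtain ⟨e, he, hne⟩ := List.exists_mem_ne_of_odd_countP hM.perm hodd
  have hlt := hM.fst_lt_snd e he
  have heq := hM.getElem?_fst_eq_snd e he
  simp only [List.getElem?_take, heq] at hne
  have hsnd : ¬ e.2 < p := fun h₂ => by simp [h₂, hlt.trans h₂] at hne
  have hfst : e.1 < p := by_contra fun h₁ => by simp [h₁, hsnd] at hne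
  refine ⟨e, he, hfst, not_lt.1 hsnd, ?_⟩
  simpa [hfst, hsnd, Option.any_eq_true] using hne

def OddlyPreceded {α : Type*} (q : α → Bool) (w : List α) : Prop :=
  ∀ p z, w[p]? = some z → q z = false → Odd ((w.take p).countP q)

namespace OddlyPreceded

variable {α : Type*} {q : α → Bool}

theorem nil : OddlyPreceded q [] := by
  simp [OddlyPreceded]

theorem append {u w : List α} (hu : OddlyPreceded q u) (hw : OddlyPreceded q w)
    (heven : Even (u.countP q)) : OddlyPreceded q (u ++ w) := by
  intro p z hz hqz
  rcases Nat.lt_or_ge p u.length with hp | hp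
  · rw [List.getElem?_append_left hp] at hz
    rw [List.take_append_of_le_length hp.le]
    exact hu p z hz hqz
  · rw [List.getElem?_append_right hp] at hz
    rw [List.take_append, List.take_of_length_le hp, List.countP_append]
    exact heven.add_odd (hw _ z hz hqz)

variable {c₁ c₂ x y : α}

theorem vblk (h₁ : q c₁) (h₂ : q c₂) (hx : q x = false) (hy : q y = false) (j : ℕ) :
    OddlyPreceded q (vblk c₁ c₂ x y j) := by
  rintro (_ | p) z hz hqz
  · simp_all [_root_.vblk]
  simp only [_root_.vblk, List.getElem?_cons_succ] at hz
  have hp : p < (List.replicate j x ++ List.replicate j y).length := by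
    by_contra! hp
    rw [List.getElem?_append_right hp, List.getElem?_singleton] at hz
    split_ifs at hz
    simp_all
  rw [_root_.vblk, List.take_succ_cons, List.countP_cons, h₁, if_pos rfl,
    List.take_append_of_le_length hp.le, List.countP_eq_zero.2, zero_add]
  · exact odd_one
  intro a ha
  rcases List.mem_append.1 (List.mem_of_mem_take ha) with ha | ha <;>
    simp [List.eq_of_mem_replicate ha, hx, hy]

end OddlyPreceded

theorem countP_vblk {α : Type*} {q : α → Bool} {c₁ c₂ x y : α} (h₁ : q c₁) (h₂ : q c₂)
    (hx : q x = false) (hy : q y = false) (j : ℕ) : (vblk c₁ c₂ x y j).countP q = 2 := by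
  simp [vblk, List.countP_replicate, h₁, h₂, hx, hy]

theorem oddlyPreceded_Vword {α : Type*} {q : α → Bool} {c₁ c₂ x y : α} (h₁ : q c₁) (h₂ : q c₂)
    (hx : q x = false) (hy : q y = false) (ℓ : ℕ) : OddlyPreceded q (Vword c₁ c₂ x y ℓ) := by
  have hv := OddlyPreceded.vblk h₁ h₂ hx hy
  have hcount := countP_vblk h₁ h₂ hx hy
  induction ℓ with
  | zero => exact .nil
  | succ ℓ ih =>
    refine ((hv _).append (hv _) ?_).append ih ?_ <;>
      simp only [List.countP_append, hcount] <;> decide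

theorem V_no_match_within_block_general {α : Type*} (c₁ c₂ x y : α)
    (h₂ : c₁ ≠ x) (h₃ : c₁ ≠ y) (h₄ : c₂ ≠ x) (h₅ : c₂ ≠ y) (ℓ : ℕ) {P : List (ℕ × ℕ)}
    (hrun : Run ([] : List (ℕ × α)) 0 (Vword c₁ c₂ x y ℓ) P)
    {p q : ℕ} (hpq : (p, q) ∈ P) :
    ¬ (∀ r, p ≤ r → r ≤ q → (Vword c₁ c₂ x y ℓ)[r]? = some x) ∧
    ¬ (∀ r, p ≤ r → r ≤ q → (Vword c₁ c₂ x y ℓ)[r]? = some y) := by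
  classical
  set isMarker : α → Bool := fun s => decide (s = c₁ ∨ s = c₂)
  have hM := hrun.isNonNestingMatching
  have hx : isMarker x = false := by simp [isMarker, h₂.symm, h₄.symm]
  have hy : isMarker y = false := by simp [isMarker, h₃.symm, h₅.symm]
  have hodd : OddlyPreceded isMarker (Vword c₁ c₂ x y ℓ) :=
    oddlyPreceded_Vword (by simp [isMarker]) (by simp [isMarker]) hx hy ℓ
  suffices key : ∀ z, isMarker z = false →
      ¬ ∀ r, p ≤ r → r ≤ q → (Vword c₁ c₂ x y ℓ)[r]? = some z from ⟨key x hx, key y hy⟩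
  intro z hz hblock
  have hpq' : p < q := hM.fst_lt_snd _ hpq
  obtain ⟨⟨a, b⟩, hab, hap, hpb, s, hbs, hs⟩ :=
    hM.exists_straddle_of_odd_countP_take (hodd p z (hblock p le_rfl hpq'.le) hz)
  have hbq : b < q := hM.snd_lt_snd _ hab _ hpq hap
  obtain rfl : s = z := Option.some.inj (hbs.symm.trans (hblock b hpb hbq.le))
  simp [hs] at hz

/-- in any accepting computation on
`V = ∏_{j=ℓ,…,1} (c₁ x^j y^j c₂)²`, no `x` is matched with another `x` from
the same maximal block `x^j`, and no `y` is matched with another `y` from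
the same maximal block.  (Two positions carrying the same symbol `x` lie in
the same maximal block iff every position between them also carries `x`.) -/
theorem V_no_match_within_block {α : Type*} (c₁ c₂ x y : α)
    (h₁ : c₁ ≠ c₂) (h₂ : c₁ ≠ x) (h₃ : c₁ ≠ y) (h₄ : c₂ ≠ x) (h₅ : c₂ ≠ y)
    (h₆ : x ≠ y) (ℓ : ℕ) {P : List (ℕ × ℕ)}
    (hrun : Run ([] : List (ℕ × α)) 0 (Vword c₁ c₂ x y ℓ) P)
    {p q : ℕ} (hpq : (p, q) ∈ P) :
    ¬ (∀ r, p ≤ r → r ≤ q → (Vword c₁ c₂ x y ℓ)[r]? = some x) ∧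
    ¬ (∀ r, p ≤ r → r ≤ q → (Vword c₁ c₂ x y ℓ)[r]? = some y) :=
  V_no_match_within_block_general c₁ c₂ x y h₂ h₃ h₄ h₅ ℓ hrun hpq
end
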